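/- Let Q be a probability measure and f bounded measurable with H := ess sup_Q f and A := {z : f(z) = H} with Q(A) > 0. Then for λ > 0, λ log E_Q[e^{f/λ}] = H + λ log( Q(A) + E_Q[e^{(f−H)/λ} 1_{A^c}] ), and the second term λ log( Q(A) + E_Q[e^{(f−H)/λ} 1_{A^c}] ) tends to 0 as λ ↓ 0 while its derivative in λ tends to log Q(A). -/

import Mathlib

open MeasureTheory Real Filter

lemma aux_mul_exp_neg_le {x : ℝ} (_hx : 0 ≤ x) : x * Real.exp (-x) ≤ Real.exp (-1) := by
  have h1 : x ≤ Real.exp (x - 1) := by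
    have := Real.add_one_le_exp (x - 1); linarith
  calc x * Real.exp (-x) ≤ Real.exp (x - 1) * Real.exp (-x) := by
        apply mul_le_mul_of_nonneg_right h1 (Real.exp_nonneg _)
    _ = Real.exp (-1) := by rw [← Real.exp_add]; ring_nf

/-- Let `Q` be a probability measure, `f` bounded measurable, `H = ess sup_Q f` and
`A = {f = H}` with `Q(A) > 0`. Then for every `λ > 0`,
`λ log E_Q[e^{f/λ}] = H + λ log(Q(A) + E_Q[e^{(f−H)/λ} 1_{Aᶜ}])`, the second term tends
to `0` as `λ ↓ 0`, and its derivative in `λ` tends to `log Q(A)` as `λ ↓ 0`. -/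
theorem smoothmax_decomposition_at_argmax
    {Z : Type*} [MeasurableSpace Z] (Q : Measure Z) [IsProbabilityMeasure Q]
    (f : Z → ℝ) (hf : Measurable f) (hb : ∃ C : ℝ, ∀ z, |f z| ≤ C)
    (H : ℝ) (hH : H = sInf {t : ℝ | Q {z | t < f z} = 0})
    (A : Set Z) (hA : A = {z | f z = H}) (hApos : 0 < Q A) :
    (∀ lam : ℝ, 0 < lam →
        lam * Real.log (∫ z, Real.exp (f z / lam) ∂Q)
          = H + lam * Real.log ((Q A).toReal + ∫ z in Aᶜ, Real.exp ((f z - H) / lam) ∂Q))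
    ∧ Tendsto
        (fun lam : ℝ =>
          lam * Real.log ((Q A).toReal + ∫ z in Aᶜ, Real.exp ((f z - H) / lam) ∂Q))
        (nhdsWithin 0 (Set.Ioi 0)) (nhds 0)
    ∧ Tendsto
        (fun lam : ℝ => deriv
          (fun t : ℝ =>
            t * Real.log ((Q A).toReal + ∫ z in Aᶜ, Real.exp ((f z - H) / t) ∂Q)) lam)
        (nhdsWithin 0 (Set.Ioi 0)) (nhds (Real.log (Q A).toReal)) := by
  obtain ⟨C, hC⟩ := hb
  have hAmeas : MeasurableSet A := by
    rw [hA]; exact hf (measurableSet_singleton H)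
  have hqA : 0 < (Q A).toReal :=
    ENNReal.toReal_pos hApos.ne' (measure_ne_top Q A)
  -- a.e. f ≤ H
  have hae : ∀ᵐ z ∂Q, f z ≤ H := by
    have hSne : ({t : ℝ | Q {z | t < f z} = 0}).Nonempty := by
      refine ⟨C, ?_⟩
      have : {z | C < f z} = ∅ := by
        ext z; simp only [Set.mem_setOf_eq, Set.mem_empty_iff_false, iff_false, not_lt]
        exact (abs_le.mp (hC z)).2
      simp [Set.mem_setOf_eq, this]
    have heps : ∀ ε : ℝ, 0 < ε → Q {z | H + ε < f z} = 0 := by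
      intro ε hε
      have hlt : sInf {t : ℝ | Q {z | t < f z} = 0} < H + ε := by
        rw [← hH]; linarith
      obtain ⟨t, ht, htlt⟩ := exists_lt_of_csInf_lt hSne hlt
      refine measure_mono_null ?_ ht
      intro z hz
      simp only [Set.mem_setOf_eq] at hz ⊢
      linarith
    have hunion : {z | H < f z} ⊆ ⋃ n : ℕ, {z | H + 1 / (n + 1) < f z} := by
      intro z hz
      simp only [Set.mem_setOf_eq] at hz
      obtain ⟨n, hn⟩ := exists_nat_one_div_lt (sub_pos.mpr hz)
      exact Set.mem_iUnion.mpr ⟨n, by simp only [Set.mem_setOf_eq]; linarith⟩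
    have h0 : Q {z | H < f z} = 0 := by
      refine measure_mono_null hunion (measure_iUnion_null fun n => heps _ ?_)
      positivity
    rw [ae_iff]
    convert h0 using 2
    ext z; simp [not_le]
  -- integrability
  have hInt : ∀ t : ℝ, 0 < t → Integrable (fun z => Real.exp ((f z - H) / t)) Q := by
    intro t ht
    refine Integrable.mono' (integrable_const (Real.exp ((C + |H|) / t)))
      (((hf.sub measurable_const).div_const t).exp.aestronglyMeasurable) ?_
    refine Filter.Eventually.of_forall fun z => ?_
    rw [Real.norm_eq_abs, abs_of_pos (Real.exp_pos _)]
    apply Real.exp_le_exp.mpr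
    have h1 : f z - H ≤ C + |H| := by
      have := abs_le.mp (hC z); have := abs_le.mp (le_refl |H|); cases abs_cases H <;> linarith
    exact div_le_div_of_nonneg_right h1 ht.le
  have hIntc : ∀ t : ℝ, 0 < t →
      Integrable (fun z => Real.exp ((f z - H) / t)) (Q.restrict Aᶜ) :=
    fun t ht => (hInt t ht).restrict
  -- set integral over A is Q(A)
  have hIA : ∀ t : ℝ, (∫ z in A, Real.exp ((f z - H) / t) ∂Q) = (Q A).toReal := by
    intro t
    rw [setIntegral_congr_fun hAmeas (g := fun _ => (1:ℝ)) ?_, setIntegral_const, smul_eq_mul,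
      mul_one, measureReal_def]
    intro z hz
    rw [hA] at hz
    simp only [Set.mem_setOf_eq] at hz
    simp [hz]
  -- nonnegativity of the compl integral
  have hI0le : ∀ t : ℝ, 0 ≤ ∫ z in Aᶜ, Real.exp ((f z - H) / t) ∂Q := by
    intro t
    exact integral_nonneg fun z => (Real.exp_pos _).le
  have hgpos : ∀ t : ℝ, 0 < (Q A).toReal + ∫ z in Aᶜ, Real.exp ((f z - H) / t) ∂Q := by
    intro t; have := hI0le t; linarith
  -- a.e. bounds on the restricted measure
  have haeR : ∀ᵐ z ∂Q.restrict Aᶜ, f z ≤ H := ae_restrict_of_ae hae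
  have haeRlt : ∀ᵐ z ∂Q.restrict Aᶜ, f z < H := by
    filter_upwards [haeR, ae_restrict_mem hAmeas.compl] with z h1 h2
    rw [hA] at h2
    simp only [Set.mem_compl_iff, Set.mem_setOf_eq] at h2
    exact lt_of_le_of_ne h1 h2
  -- Part 1
  have part1 : ∀ lam : ℝ, 0 < lam →
      lam * Real.log (∫ z, Real.exp (f z / lam) ∂Q)
        = H + lam * Real.log ((Q A).toReal + ∫ z in Aᶜ, Real.exp ((f z - H) / lam) ∂Q) := by
    intro lam hlam
    have hsplit : (∫ z, Real.exp ((f z - H) / lam) ∂Q)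
        = (Q A).toReal + ∫ z in Aᶜ, Real.exp ((f z - H) / lam) ∂Q := by
      rw [← integral_add_compl hAmeas (hInt lam hlam), hIA lam]
    have hrw : (∫ z, Real.exp (f z / lam) ∂Q)
        = Real.exp (H / lam) * ((Q A).toReal + ∫ z in Aᶜ, Real.exp ((f z - H) / lam) ∂Q) := by
      rw [← hsplit, ← integral_const_mul]
      congr 1; funext z
      rw [← Real.exp_add]
      congr 1
      field_simp
      ring
    rw [hrw, Real.log_mul (Real.exp_ne_zero _) (hgpos lam).ne', Real.log_exp, mul_add,
      mul_div_cancel₀ _ hlam.ne']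
  refine ⟨part1, ?_, ?_⟩
  -- Part 2
  · have hIle : ∀ lam : ℝ, 0 < lam → (∫ z in Aᶜ, Real.exp ((f z - H) / lam) ∂Q) ≤ 1 := by
      intro lam hlam
      calc (∫ z in Aᶜ, Real.exp ((f z - H) / lam) ∂Q) ≤ ∫ _ in Aᶜ, (1:ℝ) ∂Q := by
            refine integral_mono_ae (hIntc lam hlam) (integrable_const 1) ?_
            filter_upwards [haeR] with z hz
            rw [Real.exp_le_one_iff]
            exact div_nonpos_of_nonpos_of_nonneg (by linarith) hlam.le
        _ ≤ 1 := by
            rw [setIntegral_const, smul_eq_mul, mul_one]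
            calc (Q Aᶜ).toReal ≤ (Q Set.univ).toReal :=
                  ENNReal.toReal_mono (measure_ne_top _ _) (measure_mono (Set.subset_univ _))
              _ = 1 := by simp
    set K : ℝ := |Real.log (Q A).toReal| + |Real.log 2| with hK
    have hbd : ∀ lam : ℝ, 0 < lam →
        ‖lam * Real.log ((Q A).toReal + ∫ z in Aᶜ, Real.exp ((f z - H) / lam) ∂Q)‖
          ≤ K * lam := by
      intro lam hlam
      set g := (Q A).toReal + ∫ z in Aᶜ, Real.exp ((f z - H) / lam) ∂Q with hg
      clear_value g
      have h1 : Real.log (Q A).toReal ≤ Real.log g :=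
        Real.log_le_log hqA (by have := hI0le lam; linarith [hg])
      have h2 : Real.log g ≤ Real.log 2 := by
        rw [hg]
        apply Real.log_le_log (hgpos lam)
        have h3 : (Q A).toReal ≤ 1 := by
          calc (Q A).toReal ≤ (Q Set.univ).toReal :=
                ENNReal.toReal_mono (measure_ne_top _ _) (measure_mono (Set.subset_univ _))
            _ = 1 := by simp
        have := hIle lam hlam
        linarith
      have habs : |Real.log g| ≤ K := by
        rcases le_or_gt 0 (Real.log g) with h | h
        · rw [abs_of_nonneg h, hK]
          have : Real.log 2 ≤ |Real.log 2| := le_abs_self _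
          have : (0:ℝ) ≤ |Real.log (Q A).toReal| := abs_nonneg _
          linarith [le_abs_self (Real.log 2)]
        · rw [abs_of_neg h, hK]
          have h4 : -Real.log g ≤ -Real.log (Q A).toReal := by linarith
          have : -Real.log (Q A).toReal ≤ |Real.log (Q A).toReal| := neg_le_abs _
          have : (0:ℝ) ≤ |Real.log 2| := abs_nonneg _
          linarith
      rw [norm_mul, Real.norm_eq_abs, Real.norm_eq_abs, abs_of_pos hlam, mul_comm]
      exact mul_le_mul_of_nonneg_right habs hlam.le
    apply squeeze_zero_norm' (a := fun lam => K * lam)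
    · filter_upwards [self_mem_nhdsWithin] with lam hlam
      exact hbd lam hlam
    · have : Tendsto (fun lam : ℝ => K * lam) (nhds 0) (nhds (K * 0)) :=
        (continuous_const.mul continuous_id).tendsto 0
      rw [mul_zero] at this
      exact this.mono_left nhdsWithin_le_nhds
  -- Part 3
  · -- derivative of the inner integral
    have hderiv : ∀ lam : ℝ, 0 < lam →
        HasDerivAt (fun t : ℝ => ∫ z in Aᶜ, Real.exp ((f z - H) / t) ∂Q)
          (∫ z in Aᶜ, Real.exp ((f z - H) / lam) * ((H - f z) / lam ^ 2) ∂Q) lam := by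
      intro lam hlam
      refine (hasDerivAt_integral_of_dominated_loc_of_deriv_le (μ := Q.restrict Aᶜ)
        (F := fun t z => Real.exp ((f z - H) / t))
        (F' := fun t z => Real.exp ((f z - H) / t) * ((H - f z) / t ^ 2))
        (bound := fun _ => (2 / lam) * Real.exp (-1))
        (Metric.ball_mem_nhds lam (half_pos hlam)) ?_ (hIntc lam hlam) ?_ ?_ (integrable_const _) ?_).2
      · exact Filter.Eventually.of_forall fun t =>
          (((hf.sub measurable_const).div_const t).exp).aestronglyMeasurable
      · exact ((((hf.sub measurable_const).div_const lam).exp).mul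
          ((measurable_const.sub hf).div_const (lam ^ 2))).aestronglyMeasurable
      · filter_upwards [haeR] with z hz
        intro t ht
        rw [Metric.mem_ball, Real.dist_eq] at ht
        have ht1 : lam / 2 < t := by
          rcases abs_lt.mp ht with ⟨h1, h2⟩; linarith
        have ht0 : 0 < t := lt_trans (half_pos hlam) ht1
        have hd : 0 ≤ H - f z := sub_nonneg.mpr hz
        have hxe := aux_mul_exp_neg_le (div_nonneg hd ht0.le)
        rw [Real.norm_eq_abs, abs_of_nonneg
          (mul_nonneg (Real.exp_nonneg _) (div_nonneg hd (by positivity)))]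
        have heq : Real.exp ((f z - H) / t) * ((H - f z) / t ^ 2)
            = (1 / t) * (((H - f z) / t) * Real.exp (-((H - f z) / t))) := by
          rw [show (f z - H) / t = -((H - f z) / t) by ring]
          ring
        rw [heq]
        have h1t : 1 / t ≤ 2 / lam := by
          rw [div_le_div_iff₀ ht0 hlam]; nlinarith
        calc (1 / t) * (((H - f z) / t) * Real.exp (-((H - f z) / t)))
            ≤ (1 / t) * Real.exp (-1) :=
              mul_le_mul_of_nonneg_left hxe (by positivity)
          _ ≤ (2 / lam) * Real.exp (-1) :=
              mul_le_mul_of_nonneg_right h1t (Real.exp_nonneg _)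
      · refine Filter.Eventually.of_forall fun z => fun t ht => ?_
        rw [Metric.mem_ball, Real.dist_eq] at ht
        have ht1 : lam / 2 < t := by
          rcases abs_lt.mp ht with ⟨h1, h2⟩; linarith
        have ht0 : 0 < t := lt_trans (half_pos hlam) ht1
        have h1 : HasDerivAt (fun s : ℝ => (f z - H) * s⁻¹)
            ((f z - H) * -(t ^ 2)⁻¹) t := (hasDerivAt_inv ht0.ne').const_mul (f z - H)
        have h2 := h1.exp
        have h3 : (fun s : ℝ => Real.exp ((f z - H) * s⁻¹))
            = fun s : ℝ => Real.exp ((f z - H) / s) := by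
          funext s; rw [div_eq_mul_inv]
        rw [h3] at h2
        refine h2.congr_deriv ?_; symm
        show Real.exp ((f z - H) / t) * ((H - f z) / t ^ 2) = _
        rw [div_eq_mul_inv]
        ring
    -- eventual formula for the derivative
    have hEq : ∀ lam : ℝ, 0 < lam →
        deriv (fun t : ℝ =>
            t * Real.log ((Q A).toReal + ∫ z in Aᶜ, Real.exp ((f z - H) / t) ∂Q)) lam
          = Real.log ((Q A).toReal + ∫ z in Aᶜ, Real.exp ((f z - H) / lam) ∂Q)
            + (∫ z in Aᶜ, Real.exp ((f z - H) / lam) * ((H - f z) / lam) ∂Q)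
              / ((Q A).toReal + ∫ z in Aᶜ, Real.exp ((f z - H) / lam) ∂Q) := by
      intro lam hlam
      have hg' : HasDerivAt
          (fun t : ℝ => (Q A).toReal + ∫ z in Aᶜ, Real.exp ((f z - H) / t) ∂Q)
          (∫ z in Aᶜ, Real.exp ((f z - H) / lam) * ((H - f z) / lam ^ 2) ∂Q) lam :=
        (hderiv lam hlam).const_add _
      have hlog := hg'.log (hgpos lam).ne'
      have hmul := (hasDerivAt_id lam).mul hlog
      simp only [Pi.mul_def, id_eq] at hmul
      rw [hmul.deriv, one_mul]
      congr 1
      rw [← mul_div_assoc]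
      congr 1
      rw [← integral_const_mul]
      congr 1; funext z
      field_simp
    -- limits
    have hItendsto : Tendsto (fun lam : ℝ => ∫ z in Aᶜ, Real.exp ((f z - H) / lam) ∂Q)
        (nhdsWithin 0 (Set.Ioi 0)) (nhds 0) := by
      have h := tendsto_integral_filter_of_dominated_convergence (μ := Q.restrict Aᶜ)
        (l := nhdsWithin (0:ℝ) (Set.Ioi 0))
        (F := fun lam z => Real.exp ((f z - H) / lam)) (f := fun _ => (0:ℝ))
        (fun _ => (1:ℝ))
        (Filter.Eventually.of_forall fun t =>
          (((hf.sub measurable_const).div_const t).exp).aestronglyMeasurable)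
        ?_ (integrable_const _) ?_
      · simpa using h
      · filter_upwards [self_mem_nhdsWithin] with lam hlam
        filter_upwards [haeR] with z hz
        rw [Real.norm_eq_abs, abs_of_pos (Real.exp_pos _)]
        exact Real.exp_le_one_iff.mpr
          (div_nonpos_of_nonpos_of_nonneg (by linarith) (le_of_lt hlam))
      · filter_upwards [haeRlt] with z hz
        have hc : f z - H < 0 := sub_neg.mpr hz
        have h1 : Tendsto (fun lam : ℝ => (f z - H) * lam⁻¹)
            (nhdsWithin 0 (Set.Ioi 0)) atBot :=
          Tendsto.const_mul_atTop_of_neg hc tendsto_inv_nhdsGT_zero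
        simpa [div_eq_mul_inv] using h1
    have hJtendsto : Tendsto
        (fun lam : ℝ => ∫ z in Aᶜ, Real.exp ((f z - H) / lam) * ((H - f z) / lam) ∂Q)
        (nhdsWithin 0 (Set.Ioi 0)) (nhds 0) := by
      have h := tendsto_integral_filter_of_dominated_convergence (μ := Q.restrict Aᶜ)
        (l := nhdsWithin (0:ℝ) (Set.Ioi 0))
        (F := fun lam z => Real.exp ((f z - H) / lam) * ((H - f z) / lam))
        (f := fun _ => (0:ℝ)) (fun _ => Real.exp (-1))
        (Filter.Eventually.of_forall fun t =>
          ((((hf.sub measurable_const).div_const t).exp).mul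
            ((measurable_const.sub hf).div_const t)).aestronglyMeasurable)
        ?_ (integrable_const _) ?_
      · simpa using h
      · filter_upwards [self_mem_nhdsWithin] with lam hlam
        filter_upwards [haeR] with z hz
        have hlam0 : (0:ℝ) < lam := hlam
        have hd : 0 ≤ H - f z := sub_nonneg.mpr hz
        rw [Real.norm_eq_abs, abs_of_nonneg
          (mul_nonneg (Real.exp_nonneg _) (div_nonneg hd hlam0.le))]
        have := aux_mul_exp_neg_le (div_nonneg hd hlam0.le)
        rw [show (f z - H) / lam = -((H - f z) / lam) by ring, mul_comm]
        exact this
      · filter_upwards [haeRlt] with z hz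
        have h1 : Tendsto (fun lam : ℝ => (H - f z) * lam⁻¹)
            (nhdsWithin 0 (Set.Ioi 0)) atTop :=
          Tendsto.const_mul_atTop (sub_pos.mpr hz) tendsto_inv_nhdsGT_zero
        have h2 := (tendsto_pow_mul_exp_neg_atTop_nhds_zero 1).comp h1
        have h3 : (fun lam : ℝ => Real.exp ((f z - H) / lam) * ((H - f z) / lam))
            = (fun x : ℝ => x ^ 1 * Real.exp (-x)) ∘ (fun lam : ℝ => (H - f z) * lam⁻¹) := by
          funext s
          simp only [Function.comp_apply, pow_one]
          rw [show (f z - H) / s = -((H - f z) * s⁻¹) by rw [div_eq_mul_inv]; ring,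
            div_eq_mul_inv]
          ring
        rw [h3]
        exact h2
    have hgt : Tendsto
        (fun lam : ℝ => (Q A).toReal + ∫ z in Aᶜ, Real.exp ((f z - H) / lam) ∂Q)
        (nhdsWithin 0 (Set.Ioi 0)) (nhds ((Q A).toReal)) := by
      have := tendsto_const_nhds (x := (Q A).toReal)
        (f := nhdsWithin (0:ℝ) (Set.Ioi 0)) |>.add hItendsto
      simpa using this
    have hlogt : Tendsto
        (fun lam : ℝ =>
          Real.log ((Q A).toReal + ∫ z in Aᶜ, Real.exp ((f z - H) / lam) ∂Q))
        (nhdsWithin 0 (Set.Ioi 0)) (nhds (Real.log (Q A).toReal)) :=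
      (Real.continuousAt_log hqA.ne').tendsto.comp hgt
    have hdivt : Tendsto
        (fun lam : ℝ =>
          (∫ z in Aᶜ, Real.exp ((f z - H) / lam) * ((H - f z) / lam) ∂Q)
            / ((Q A).toReal + ∫ z in Aᶜ, Real.exp ((f z - H) / lam) ∂Q))
        (nhdsWithin 0 (Set.Ioi 0)) (nhds 0) := by
      have := hJtendsto.div hgt hqA.ne'
      simpa [Pi.div_def] using this
    have hfinal := hlogt.add hdivt
    rw [add_zero] at hfinal
    refine Tendsto.congr' ?_ hfinal
    filter_upwards [self_mem_nhdsWithin] with lam hlam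
    exact (hEq lam hlam).symm
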